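/- arXiv:2203.01896 — 2 statements merged into one kernel-verified Lean document; each statement's English description precedes it below -/
import Mathlib

section
/- Let G be a full DAG with an ample framing F, and suppose G has no idle edges. Then the number of exceptional routes of [G,F] equals the sum of the out-degrees of the sources of G, which also equals the sum of the in-degrees of the sinks of G. In particular, this number is independent of the choice of ample framing. -/
/-- A finite directed acyclic multigraph. -/
structure DAG where
  V : Type
  E : Type
  [fintypeV : Fintype V]
  [fintypeE : Fintype E]
  [decEqV : DecidableEq V]
  [decEqE : DecidableEq E]
  src : E → V
  tgt : E → V
  acyclic : ∀ v : V,
    ¬ Relation.TransGen (fun a b : V => ∃ e : E, src e = a ∧ tgt e = b) v v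

attribute [instance] DAG.fintypeV DAG.fintypeE DAG.decEqV DAG.decEqE

namespace DAG

variable (G : DAG)

/-- A vertex with no incoming edges. -/
def IsSource (v : G.V) : Prop := ∀ e : G.E, G.tgt e ≠ v

/-- A vertex with no outgoing edges. -/
def IsSink (v : G.V) : Prop := ∀ e : G.E, G.src e ≠ v

/-- An inner vertex is neither a source nor a sink. -/
def IsInner (v : G.V) : Prop := ¬ G.IsSource v ∧ ¬ G.IsSink v

instance : DecidablePred G.IsSource := fun v =>
  decidable_of_iff (∀ e : G.E, G.tgt e ≠ v) Iff.rfl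

instance : DecidablePred G.IsSink := fun v =>
  decidable_of_iff (∀ e : G.E, G.src e ≠ v) Iff.rfl

instance : DecidablePred G.IsInner := fun v =>
  decidable_of_iff (¬ G.IsSource v ∧ ¬ G.IsSink v) Iff.rfl

/-- In-degree: the number of edges with target `v`. -/
def indeg (v : G.V) : ℕ := Fintype.card {e : G.E // G.tgt e = v}

/-- Out-degree: the number of edges with source `v`. -/
def outdeg (v : G.V) : ℕ := Fintype.card {e : G.E // G.src e = v}

/-- A DAG is full if every inner vertex has in-degree 2 and out-degree 2. -/
def Full : Prop := ∀ v : G.V, G.IsInner v → G.indeg v = 2 ∧ G.outdeg v = 2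

/-- A route: a maximal directed path, i.e. a nonempty list of consecutive edges
starting at a source and ending at a sink. -/
structure Route where
  edges : List G.E
  ne : edges ≠ []
  chain : edges.Chain' (fun e f => G.tgt e = G.src f)
  source_start : G.IsSource (G.src (edges.head ne))
  sink_end : G.IsSink (G.tgt (edges.getLast ne))

/-- A route visits a vertex if the vertex is an endpoint of one of its edges. -/
def Route.visits (R : G.Route) (v : G.V) : Prop :=
  ∃ e ∈ R.edges, G.src e = v ∨ G.tgt e = v

/-- A framing: a linear order on the incoming edges and a linear order on the
outgoing edges of every inner vertex. -/
structure Framing where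
  inlt : G.E → G.E → Prop
  outlt : G.E → G.E → Prop
  inlt_tgt : ∀ {e f}, inlt e f → G.tgt e = G.tgt f
  inlt_inner : ∀ {e f}, inlt e f → G.IsInner (G.tgt e)
  inlt_irrefl : ∀ e, ¬ inlt e e
  inlt_trans : ∀ {e f g}, inlt e f → inlt f g → inlt e g
  inlt_total : ∀ e f, G.tgt e = G.tgt f → G.IsInner (G.tgt e) → e ≠ f →
    inlt e f ∨ inlt f e
  outlt_src : ∀ {e f}, outlt e f → G.src e = G.src f
  outlt_inner : ∀ {e f}, outlt e f → G.IsInner (G.src e)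
  outlt_irrefl : ∀ e, ¬ outlt e e
  outlt_trans : ∀ {e f g}, outlt e f → outlt f g → outlt e g
  outlt_total : ∀ e f, G.src e = G.src f → G.IsInner (G.src e) → e ≠ f →
    outlt e f ∨ outlt f e

/-- The induced order on paths ending at a common vertex: compare the two edges
just before the longest common suffix. -/
def inPathLt (F : G.Framing) (P Q : List G.E) : Prop :=
  ∃ (p q s : List G.E) (e f : G.E), e ≠ f ∧
    P = p ++ e :: s ∧ Q = q ++ f :: s ∧ F.inlt e f

/-- The induced order on paths starting at a common vertex: compare the two edges
just after the longest common prefix. -/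
def outPathLt (F : G.Framing) (P Q : List G.E) : Prop :=
  ∃ (s p q : List G.E) (e f : G.E), e ≠ f ∧
    P = s ++ e :: p ∧ Q = s ++ f :: q ∧ F.outlt e f

/-- Routes `P` and `Q` are in conflict (with `P` playing the first role) if they
pass through a common inner vertex `v` with `Pv ≺ Qv` in the in-order and
`vQ ≺ vP` in the out-order. -/
def Conflict (F : G.Framing) (P Q : G.Route) : Prop :=
  ∃ (v : G.V) (a b c d : List G.E) (ea ec : G.E),
    P.edges = a ++ [ea] ++ b ∧ Q.edges = c ++ [ec] ++ d ∧
    G.tgt ea = v ∧ G.tgt ec = v ∧ b ≠ [] ∧ d ≠ [] ∧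
    G.inPathLt F (a ++ [ea]) (c ++ [ec]) ∧ G.outPathLt F d b

/-- Two routes are coherent if they are not in conflict at any common inner
vertex (in either order). -/
def CoherentPair (F : G.Framing) (P Q : G.Route) : Prop :=
  ¬ G.Conflict F P Q ∧ ¬ G.Conflict F Q P

/-- A route is exceptional if it is coherent with every route. -/
def Exceptional (F : G.Framing) (R : G.Route) : Prop :=
  ∀ S : G.Route, G.CoherentPair F R S

/-- An edge is idle if it is the unique incoming or the unique outgoing edge of
an inner vertex. -/
def Idle (e : G.E) : Prop :=
  (G.IsInner (G.tgt e) ∧ ∀ f : G.E, G.tgt f = G.tgt e → f = e) ∨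
  (G.IsInner (G.src e) ∧ ∀ f : G.E, G.src f = G.src e → f = e)

/-- A framing is ample if every non-idle edge lies on an exceptional route. -/
def Ample (F : G.Framing) : Prop :=
  ∀ e : G.E, ¬ G.Idle e → ∃ R : G.Route, G.Exceptional F R ∧ e ∈ R.edges

/-- `e` is smallest among the edges entering its target. -/
def MinIn (F : G.Framing) (e : G.E) : Prop :=
  ∀ f : G.E, G.tgt f = G.tgt e → f ≠ e → F.inlt e f

/-- `e` is largest among the edges entering its target. -/
def MaxIn (F : G.Framing) (e : G.E) : Prop :=
  ∀ f : G.E, G.tgt f = G.tgt e → f ≠ e → F.inlt f e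

/-- `e` is smallest among the edges leaving its source. -/
def MinOut (F : G.Framing) (e : G.E) : Prop :=
  ∀ f : G.E, G.src f = G.src e → f ≠ e → F.outlt e f

/-- `e` is largest among the edges leaving its source. -/
def MaxOut (F : G.Framing) (e : G.E) : Prop :=
  ∀ f : G.E, G.src f = G.src e → f ≠ e → F.outlt f e

/-- The characteristic vector of a route. -/
noncomputable def charVec (R : G.Route) : G.E → ℝ :=
  fun e => if e ∈ R.edges then 1 else 0

end DAG

/-!
An exceptional route is determined by its first edge. If two exceptional routes share an
initial segment ending in an edge `g` and then leave the vertex `v = tgt g` along different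
edges, take a second edge `g'` into `v` (it exists as `g` is not idle), extend it backwards to
a source and continue it forward along the branch of one of the routes: for the branch dictated
by the order of `g` and `g'` at `v`, the new route is in conflict with the other route.
Conversely, by ampleness every edge leaving a source starts an exceptional route, so exceptional
routes correspond to edges leaving sources. For a full DAG, in-degree and out-degree agree at
inner vertices, and the handshake count identifies the edges leaving sources with those entering
sinks.
-/

namespace DAG

variable {G : DAG}

theorem Route.ext {R S : G.Route} (h : R.edges = S.edges) : R = S := by
  cases R; cases S; cases h; rfl

theorem Route.tgt_eq_src (R : G.Route) {A p : List G.E} {g e : G.E}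
    (h : R.edges = A ++ [g] ++ e :: p) : G.tgt g = G.src e := by
  have hchain : List.IsChain (fun e f => G.tgt e = G.src f) (A ++ [g, e] ++ p) := by
    rw [show A ++ [g, e] ++ p = R.edges by simp [h]]
    exact R.chain
  exact (List.isChain_pair (R := fun e f : G.E => G.tgt e = G.src f)).mp
    (hchain.infix ⟨A, p, rfl⟩)

theorem Route.isSink_tgt (R : G.Route) {A : List G.E} {g : G.E} (h : R.edges = A ++ [g]) :
    G.IsSink (G.tgt g) := by
  simpa [h] using R.sink_end

theorem Route.head_eq_of_mem_of_isSource (R : G.Route) {e : G.E} (he : e ∈ R.edges)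
    (hs : G.IsSource (G.src e)) : R.edges.head R.ne = e := by
  obtain ⟨s, t, hst⟩ := List.append_of_mem he
  rcases List.eq_nil_or_concat' s with rfl | ⟨s, a, rfl⟩
  · simp [hst]
  · exact absurd (R.tgt_eq_src hst) (hs a)

theorem wellFounded_adj (G : DAG) :
    WellFounded (fun a b : G.V => ∃ e : G.E, G.src e = a ∧ G.tgt e = b) := by
  set adj := fun a b : G.V => ∃ e : G.E, G.src e = a ∧ G.tgt e = b
  have : Std.Irrefl (Relation.TransGen adj) := ⟨G.acyclic⟩
  exact Subrelation.wf (fun h => Relation.TransGen.single h)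
    (Finite.wellFounded_of_trans_of_irrefl (Relation.TransGen adj))

theorem exists_path_from_source (e : G.E) :
    ∃ L : List G.E, (L ++ [e]).IsChain (fun e f => G.tgt e = G.src f) ∧
      G.IsSource (G.src ((L ++ [e]).head (by simp))) := by
  induction hv : G.src e using G.wellFounded_adj.induction generalizing e with
  | _ v ih =>
    by_cases hs : G.IsSource v
    · exact ⟨[], List.isChain_singleton e, by simpa [hv]⟩
    obtain ⟨g, hg⟩ : ∃ g : G.E, G.tgt g = v := by simpa [IsSource] using hs
    obtain ⟨L, hchain, hsource⟩ := ih (G.src g) ⟨g, rfl, hg⟩ g rfl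
    refine ⟨L ++ [g], hchain.append (List.isChain_singleton e) ?_, ?_⟩
    · simp [hg, hv]
    · rwa [List.head_append_of_ne_nil (by simp)]

theorem Route.exists_reroute (R : G.Route) {A q : List G.E} {g f g' : G.E}
    (hR : R.edges = A ++ [g] ++ f :: q) (hg' : G.tgt g' = G.tgt g) :
    ∃ (L : List G.E) (S : G.Route), S.edges = L ++ [g'] ++ f :: q := by
  obtain ⟨L, hchain, hsource⟩ := exists_path_from_source g'
  have htail : (f :: q).IsChain (fun e f => G.tgt e = G.src f) :=
    (show (A ++ [g] ++ f :: q).IsChain _ from hR ▸ R.chain).right_of_append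
  refine ⟨L, ⟨L ++ [g'] ++ f :: q, by simp, ?_, ?_, ?_⟩, rfl⟩
  · exact hchain.append htail (by simp [hg', R.tgt_eq_src hR])
  · rwa [List.head_append_of_ne_nil (by simp)]
  · simpa [List.getLast_append_of_ne_nil, hR] using R.sink_end

variable {F : G.Framing}

theorem conflict_of_inlt_of_outlt {P Q : G.Route} {a c p q : List G.E} {x y e f : G.E}
    (hP : P.edges = a ++ [x] ++ f :: q) (hQ : Q.edges = c ++ [y] ++ e :: p)
    (hxy : F.inlt x y) (hef : F.outlt e f) : G.Conflict F P Q :=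
  ⟨G.tgt x, a, f :: q, c, e :: p, x, y, hP, hQ, rfl, (F.inlt_tgt hxy).symm,
    List.cons_ne_nil _ _, List.cons_ne_nil _ _,
    ⟨a, c, [], x, y, fun h => F.inlt_irrefl x (h ▸ hxy), rfl, rfl, hxy⟩,
    ⟨[], p, q, e, f, fun h => F.outlt_irrefl e (h ▸ hef), rfl, rfl, hef⟩⟩

theorem exists_ne_tgt_eq_of_not_idle {g : G.E} (hg : ¬ G.Idle g) (hinner : G.IsInner (G.tgt g)) :
    ∃ g' : G.E, g' ≠ g ∧ G.tgt g' = G.tgt g := by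
  by_contra! h
  exact hg (Or.inl ⟨hinner, fun g' hg' => by_contra fun hne => h g' hne hg'⟩)

theorem Exceptional.not_outlt_of_branch {R S : G.Route} (hR : G.Exceptional F R)
    (hS : G.Exceptional F S) {A p q : List G.E} {g e f : G.E} (hg : ¬ G.Idle g)
    (hRe : R.edges = A ++ [g] ++ e :: p) (hSf : S.edges = A ++ [g] ++ f :: q) :
    ¬ F.outlt e f := by
  intro hef
  have hinner : G.IsInner (G.tgt g) :=
    ⟨fun h => h g rfl, fun h => h e (R.tgt_eq_src hRe).symm⟩
  obtain ⟨g', hne, htgt⟩ := exists_ne_tgt_eq_of_not_idle hg hinner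
  rcases F.inlt_total g' g htgt (htgt ▸ hinner) hne with hlt | hlt
  · obtain ⟨L, T, hT⟩ := S.exists_reroute hSf htgt
    exact (hR T).2 (conflict_of_inlt_of_outlt hT hRe hlt hef)
  · obtain ⟨L, T, hT⟩ := R.exists_reroute hRe htgt
    exact (hS T).1 (conflict_of_inlt_of_outlt hSf hT hlt hef)

theorem Exceptional.eq_of_edges_eq_append {R S : G.Route} (hR : G.Exceptional F R)
    (hS : G.Exceptional F S) (hnoidle : ∀ e : G.E, ¬ G.Idle e) {r s : List G.E} :
    ∀ {A : List G.E} {g : G.E},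
      R.edges = A ++ [g] ++ r → S.edges = A ++ [g] ++ s → r = s := by
  induction r generalizing s with
  | nil =>
    intro A g hr hs
    rcases s with _ | ⟨f, s⟩
    · rfl
    · exact (R.isSink_tgt (by simpa using hr) f (S.tgt_eq_src hs).symm).elim
  | cons e r ih =>
    intro A g hr hs
    rcases s with _ | ⟨f, s⟩
    · exact (S.isSink_tgt (by simpa using hs) e (R.tgt_eq_src hr).symm).elim
    by_cases hef : e = f
    · subst hef
      rw [ih (s := s) (A := A ++ [g]) (g := e) (by simp [hr]) (by simp [hs])]
    · have hsrc : G.src e = G.src f := (R.tgt_eq_src hr).symm.trans (S.tgt_eq_src hs)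
      have hinner : G.IsInner (G.src e) :=
        ⟨fun h => h g (R.tgt_eq_src hr), fun h => h e rfl⟩
      rcases F.outlt_total e f hsrc hinner hef with hlt | hlt
      · exact absurd hlt (hR.not_outlt_of_branch hS (hnoidle g) hr hs)
      · exact absurd hlt (hS.not_outlt_of_branch hR (hnoidle g) hs hr)

theorem Exceptional.eq_of_head_eq {R S : G.Route} (hR : G.Exceptional F R)
    (hS : G.Exceptional F S) (hnoidle : ∀ e : G.E, ¬ G.Idle e)
    (hhead : R.edges.head R.ne = S.edges.head S.ne) : R = S := by
  obtain ⟨x, r, hr⟩ := List.exists_cons_of_ne_nil R.ne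
  obtain ⟨y, s, hs⟩ := List.exists_cons_of_ne_nil S.ne
  obtain rfl : x = y := by simpa [hr, hs] using hhead
  apply Route.ext
  rw [hr, hs, hR.eq_of_edges_eq_append hS hnoidle (r := r) (s := s) (A := []) (g := x)
    (by simpa) (by simpa)]

theorem ncard_exceptional_eq_card_filter_isSource_src (hample : G.Ample F)
    (hnoidle : ∀ e : G.E, ¬ G.Idle e) :
    {R : G.Route | G.Exceptional F R}.ncard =
      (Finset.univ.filter fun e => G.IsSource (G.src e)).card := by
  rw [← Set.ncard_coe_finset, Finset.coe_filter]
  refine Set.ncard_congr (fun R _ => R.edges.head R.ne) (fun R _ => by simpa using R.source_start)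
    (fun R S hR hS => hR.eq_of_head_eq hS hnoidle) fun e he => ?_
  obtain ⟨R, hR, hmem⟩ := hample e (hnoidle e)
  exact ⟨R, hR, R.head_eq_of_mem_of_isSource hmem (by simpa using he)⟩

theorem indeg_eq_zero_iff {v : G.V} : G.indeg v = 0 ↔ G.IsSource v := by
  simp [indeg, IsSource, Fintype.card_eq_zero_iff, isEmpty_subtype]

theorem outdeg_eq_zero_iff {v : G.V} : G.outdeg v = 0 ↔ G.IsSink v := by
  simp [outdeg, IsSink, Fintype.card_eq_zero_iff, isEmpty_subtype]

theorem card_filter_src (P : G.V → Prop) [DecidablePred P] :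
    (Finset.univ.filter fun e => P (G.src e)).card =
      ∑ v ∈ Finset.univ.filter P, G.outdeg v := by
  rw [Finset.card_eq_sum_card_fiberwise (f := G.src) (t := Finset.univ.filter P) (by intro e; simp)]
  refine Finset.sum_congr rfl fun v hv => ?_
  rw [outdeg, Fintype.card_subtype, Finset.filter_filter]
  congr 1
  ext e
  simp_all

theorem card_filter_tgt (P : G.V → Prop) [DecidablePred P] :
    (Finset.univ.filter fun e => P (G.tgt e)).card =
      ∑ v ∈ Finset.univ.filter P, G.indeg v := by
  rw [Finset.card_eq_sum_card_fiberwise (f := G.tgt) (t := Finset.univ.filter P) (by intro e; simp)]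
  refine Finset.sum_congr rfl fun v hv => ?_
  rw [indeg, Fintype.card_subtype, Finset.filter_filter]
  congr 1
  ext e
  simp_all

theorem sum_outdeg (G : DAG) : ∑ v, G.outdeg v = Fintype.card G.E := by
  simpa using (card_filter_src (G := G) fun _ => True).symm

theorem sum_indeg (G : DAG) : ∑ v, G.indeg v = Fintype.card G.E := by
  simpa using (card_filter_tgt (G := G) fun _ => True).symm

theorem sum_outdeg_isSource_eq_sum_indeg_isSink
    (hbal : ∀ v : G.V, G.IsInner v → G.indeg v = G.outdeg v) :
    ∑ v ∈ Finset.univ.filter (fun v => G.IsSource v), G.outdeg v =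
      ∑ v ∈ Finset.univ.filter (fun v => G.IsSink v), G.indeg v := by
  have hpoint : ∀ v : G.V, G.outdeg v + (if G.IsSink v then G.indeg v else 0) =
      G.indeg v + (if G.IsSource v then G.outdeg v else 0) := by
    intro v
    by_cases hsource : G.IsSource v
    · simp [hsource, indeg_eq_zero_iff.mpr hsource]
    by_cases hsink : G.IsSink v
    · simp [hsource, hsink, outdeg_eq_zero_iff.mpr hsink]
    · simp [hsource, hsink, hbal v ⟨hsource, hsink⟩]
  have hsum := Fintype.sum_congr _ _ hpoint
  rw [Finset.sum_add_distrib, Finset.sum_add_distrib, sum_outdeg, sum_indeg] at hsum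
  rw [Finset.sum_filter, Finset.sum_filter]
  omega

end DAG

/-- For a full DAG with an ample framing and no idle edges, the
number of exceptional routes equals the sum of out-degrees of the sources,
which in turn equals the sum of in-degrees of the sinks.  In particular this
number does not depend on the ample framing. -/
theorem card_exceptional_routes (G : DAG) (F : G.Framing)
    (hfull : G.Full) (hample : G.Ample F) (hnoidle : ∀ e : G.E, ¬ G.Idle e) :
    Set.ncard {R : G.Route | G.Exceptional F R} =
      ∑ v ∈ Finset.univ.filter (fun v => G.IsSource v), G.outdeg v ∧
    Set.ncard {R : G.Route | G.Exceptional F R} =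
      ∑ v ∈ Finset.univ.filter (fun v => G.IsSink v), G.indeg v := by
  have hsource : Set.ncard {R : G.Route | G.Exceptional F R} =
      ∑ v ∈ Finset.univ.filter (fun v => G.IsSource v), G.outdeg v := by
    rw [DAG.ncard_exceptional_eq_card_filter_isSource_src hample hnoidle, DAG.card_filter_src]
  refine ⟨hsource, hsource.trans (DAG.sum_outdeg_isSource_eq_sum_indeg_isSink fun v hv => ?_)⟩
  exact (hfull v hv).1.trans (hfull v hv).2.symm
end

section
/- Every full DAG admits an ample framing. Equivalently, every full DAG admits a labeling of its edges by {1,2} such that at every inner vertex, the two incoming edges receive distinct labels and the two outgoing edges receive distinct labels. -/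
/-! Label every edge `true` or `false` so that the two edges entering, and the two edges leaving,
an inner vertex carry different labels, and order each such pair with `true` first. A conflict
between two routes needs an edge of each label on both routes, so every monochromatic route is
exceptional; and since each inner vertex has an entering and a leaving edge of either label, every
edge extends in both directions to a monochromatic route.

Such a labeling exists because the in-pairing and the out-pairing of edges are involutions `s`, `t`
whose union has only even cycles: `s` conjugates `t * s` to its inverse, so an orbit of `t * s`
through both `y` and `s y` would produce a fixed point of `s` or of `t`. -/

open Function Equiv

theorem exists_bool_flip_of_involutive {α : Type*} {ι : α → α} (hι : Involutive ι)
    (hfix : ∀ a, ι a ≠ a) : ∃ f : α → Bool, ∀ a, f (ι a) = !f a := by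
  let := IsWellOrder.linearOrder (WellOrderingRel (α := α))
  refine ⟨fun a => decide (a < ι a), fun a => ?_⟩
  simp only [hι a]
  rcases (hfix a).lt_or_gt with h | h <;> simp [h, h.not_gt]

theorem semiconjBy_mul_zpow {G : Type*} [Group G] {s t : G} (hs : s * s = 1) (ht : t * t = 1)
    (k : ℤ) : SemiconjBy s ((t * s) ^ k) ((t * s) ^ (-k)) := by
  rw [zpow_neg, ← inv_zpow]
  refine SemiconjBy.zpow_right ?_ k
  rw [SemiconjBy, mul_inv_rev, inv_eq_of_mul_eq_one_right hs, inv_eq_of_mul_eq_one_right ht,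
    ← mul_assoc]

namespace Equiv.Perm

variable {Y : Type*} {s t : Perm Y}

theorem SameCycle.apply_of_mul_self (hs : s * s = 1) (ht : t * t = 1) {x y : Y}
    (h : (t * s).SameCycle x y) : (t * s).SameCycle (s x) (s y) := by
  obtain ⟨k, rfl⟩ := h
  exact ⟨-k, congr($(semiconjBy_mul_zpow hs ht k) x).symm⟩

theorem not_sameCycle_mul_apply_self (hs : s * s = 1) (ht : t * t = 1) (hs' : ∀ y, s y ≠ y)
    (ht' : ∀ y, t y ≠ y) (y : Y) : ¬ (t * s).SameCycle y (s y) := by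
  set p := t * s
  have comm (k : ℤ) (x : Y) : s ((p ^ k) x) = (p ^ (-k)) (s x) :=
    congr($(semiconjBy_mul_zpow hs ht k) x)
  rintro ⟨k, hk⟩
  obtain ⟨n, rfl | rfl⟩ := Int.even_or_odd' k
  · apply hs' ((p ^ n) y)
    rw [comm, ← hk, ← Perm.mul_apply, ← zpow_add]
    congr 2; ring
  · apply ht' (s ((p ^ n) y))
    have h : s ((p ^ n) y) = p ((p ^ n) y) := by
      rw [comm, ← hk, ← Perm.mul_apply, ← Perm.mul_apply, ← zpow_add, ← zpow_one_add]
      congr 2; ring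
    exact h.symm

theorem exists_bool_flip_of_fixedPointFree (hs : s * s = 1) (ht : t * t = 1)
    (hs' : ∀ y, s y ≠ y) (ht' : ∀ y, t y ≠ y) :
    ∃ c : Y → Bool, ∀ y, c (s y) = !c y ∧ c (t y) = !c y := by
  let S := SameCycle.setoid (t * s)
  let ι : Quotient S → Quotient S := Quotient.map s fun _ _ => SameCycle.apply_of_mul_self hs ht
  have hι : Involutive ι := by
    rintro ⟨y⟩
    exact congrArg (Quotient.mk S) congr($hs y)
  obtain ⟨f, hf⟩ := exists_bool_flip_of_involutive hι fun q => q.inductionOn fun y h =>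
    not_sameCycle_mul_apply_self hs ht hs' ht' y (Quotient.exact h).symm
  refine ⟨fun y => f ⟦y⟧, fun y => ⟨hf ⟦y⟧, ?_⟩⟩
  have : t y = (t * s) (s y) := congrArg t congr($hs y).symm
  rw [← hf ⟦y⟧, this]
  exact congrArg f (Quotient.sound (sameCycle_apply_left.2 (SameCycle.refl _ _)))

end Equiv.Perm

section Involution

variable {X : Type*} [DecidableEq X]

/-- Two copies of `X`, crossed over at the fixed points of `s`; doing this for two involutions
closes the paths of their joint graph into cycles. -/
def doubleInvolution (s : X → X) (u : X × Bool) : X × Bool :=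
  if s u.1 = u.1 then (u.1, !u.2) else (s u.1, u.2)

theorem involutive_doubleInvolution {s : X → X} (hs : Involutive s) :
    Involutive (doubleInvolution s) := by
  rintro ⟨x, b⟩
  by_cases h : s x = x
  · simp [doubleInvolution, h]
  · simp [doubleInvolution, h, hs x, Ne.symm h]

theorem doubleInvolution_ne (s : X → X) (u : X × Bool) : doubleInvolution s u ≠ u := by
  by_cases h : s u.1 = u.1 <;> simp [doubleInvolution, h, Prod.ext_iff]

theorem doubleInvolution_of_ne {s : X → X} {x : X} (h : s x ≠ x) (b : Bool) :
    doubleInvolution s (x, b) = (s x, b) := if_neg h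

theorem exists_bool_coloring_of_involutive {s t : X → X} (hs : Involutive s) (ht : Involutive t) :
    ∃ c : X → Bool, ∀ x, (s x ≠ x → c (s x) ≠ c x) ∧ (t x ≠ x → c (t x) ≠ c x) := by
  have toPerm_mul_self {f : X × Bool → X × Bool} (hf : Involutive f) :
      hf.toPerm * hf.toPerm = 1 :=
    Perm.ext hf
  obtain ⟨c, hc⟩ := Perm.exists_bool_flip_of_fixedPointFree
    (toPerm_mul_self (involutive_doubleInvolution hs))
    (toPerm_mul_self (involutive_doubleInvolution ht))
    (doubleInvolution_ne s) (doubleInvolution_ne t)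
  refine ⟨fun x => c (x, false), fun x => ⟨fun h => ?_, fun h => ?_⟩⟩
  · have := (hc (x, false)).1
    simp_all [doubleInvolution_of_ne h]
  · have := (hc (x, false)).2
    simp_all [doubleInvolution_of_ne h]

end Involution

section Labeling

variable {α β : Type*} {g : α → β} {p : β → Prop} {c : α → Bool}

theorem eq_of_ne_of_ncard_preimage_le_two [Finite α] {b : β} (hb : (g ⁻¹' {b}).ncard ≤ 2)
    {a a' a'' : α} (ha : g a = b) (ha' : g a' = b) (ha'' : g a'' = b) (h' : a' ≠ a)
    (h'' : a'' ≠ a) : a' = a'' := by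
  by_contra h
  exact hb.not_gt ((Set.two_lt_ncard_iff (Set.toFinite _)).2
    ⟨a, a', a'', ha, ha', ha'', h'.symm, h''.symm, h⟩)

theorem exists_involutive_of_ncard_preimage_le_two [Finite α] (g : α → β) (p : β → Prop)
    (h : ∀ b, p b → (g ⁻¹' {b}).ncard ≤ 2) :
    ∃ σ : α → α, Involutive σ ∧ ∀ a a', p (g a) → g a' = g a → a' ≠ a → a' = σ a := by
  classical
  let σ a := if h : ∃ a', p (g a) ∧ g a' = g a ∧ a' ≠ a then h.choose else a
  have hσ {a a'} (hp : p (g a)) (hg : g a' = g a) (hne : a' ≠ a) : a' = σ a := by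
    have hex : ∃ a', p (g a) ∧ g a' = g a ∧ a' ≠ a := ⟨a', hp, hg, hne⟩
    obtain ⟨-, hg', hne'⟩ := hex.choose_spec
    simp only [σ, dif_pos hex]
    exact eq_of_ne_of_ncard_preimage_le_two (h _ hp) rfl hg hg' hne hne'
  refine ⟨σ, fun a => ?_, fun a a' => hσ⟩
  by_cases hex : ∃ a', p (g a) ∧ g a' = g a ∧ a' ≠ a
  · obtain ⟨hp, hg, hne⟩ := hex.choose_spec
    have hσa : σ a = hex.choose := dif_pos hex
    rw [hσa]
    exact (hσ (by rwa [hg]) hg.symm hne.symm).symm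
  · have hσa : σ a = a := dif_neg hex
    rw [hσa, hσa]

theorem injOn_preimage_of_eq_apply {σ : α → α}
    (hσ : ∀ a a', p (g a) → g a' = g a → a' ≠ a → a' = σ a) (hc : ∀ a, σ a ≠ a → c (σ a) ≠ c a)
    {b : β} (hb : p b) : Set.InjOn c (g ⁻¹' {b}) := by
  intro a ha a' ha' hca
  by_contra hne
  obtain rfl := hσ a a' (ha ▸ hb) (ha'.trans ha.symm) (Ne.symm hne)
  exact hc a (Ne.symm hne) hca.symm

theorem exists_bool_injOn_preimage [Finite α] {γ : Type*} (g₁ : α → β) (g₂ : α → γ)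
    (p₁ : β → Prop) (p₂ : γ → Prop) (h₁ : ∀ b, p₁ b → (g₁ ⁻¹' {b}).ncard ≤ 2)
    (h₂ : ∀ b, p₂ b → (g₂ ⁻¹' {b}).ncard ≤ 2) :
    ∃ c : α → Bool, (∀ b, p₁ b → Set.InjOn c (g₁ ⁻¹' {b})) ∧
      (∀ b, p₂ b → Set.InjOn c (g₂ ⁻¹' {b})) := by
  classical
  obtain ⟨σ₁, hσ₁, hσ₁g⟩ := exists_involutive_of_ncard_preimage_le_two g₁ p₁ h₁
  obtain ⟨σ₂, hσ₂, hσ₂g⟩ := exists_involutive_of_ncard_preimage_le_two g₂ p₂ h₂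
  obtain ⟨c, hc⟩ := exists_bool_coloring_of_involutive hσ₁ hσ₂
  exact ⟨c, fun _ => injOn_preimage_of_eq_apply hσ₁g fun a => (hc a).1,
    fun _ => injOn_preimage_of_eq_apply hσ₂g fun a => (hc a).2⟩

theorem exists_apply_eq_of_ncard_preimage_eq_two {b : β} (hcard : (g ⁻¹' {b}).ncard = 2)
    (hc : Set.InjOn c (g ⁻¹' {b})) (k : Bool) : ∃ a, g a = b ∧ c a = k := by
  obtain ⟨x, y, hxy, hs⟩ := Set.ncard_eq_two.1 hcard
  have hx : x ∈ g ⁻¹' {b} := by rw [hs]; exact Set.mem_insert x {y}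
  have hy : y ∈ g ⁻¹' {b} := by rw [hs]; exact Set.mem_insert_of_mem x rfl
  have hcxy : c x ≠ c y := fun h => hxy (hc hx hy h)
  by_cases hk : c x = k
  · exact ⟨x, hx, hk⟩
  · exact ⟨y, hy, by cases k <;> cases hcx : c x <;> simp_all⟩

def labelLt (g : α → β) (p : β → Prop) (c : α → Bool) (a b : α) : Prop :=
  g a = g b ∧ p (g a) ∧ c a = true ∧ c b = false

theorem labelLt_irrefl (a : α) : ¬ labelLt g p c a a :=
  fun h => Bool.false_ne_true (h.2.2.2.symm.trans h.2.2.1)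

theorem labelLt_trans {a b d : α} (hab : labelLt g p c a b) (hbd : labelLt g p c b d) :
    labelLt g p c a d :=
  (Bool.false_ne_true (hab.2.2.2.symm.trans hbd.2.2.1)).elim

theorem labelLt_total (hc : ∀ b, p b → Set.InjOn c (g ⁻¹' {b})) {a b : α} (hg : g a = g b)
    (hp : p (g a)) (hne : a ≠ b) : labelLt g p c a b ∨ labelLt g p c b a := by
  have hcab : c a ≠ c b := fun h => hne (hc _ hp rfl hg.symm h)
  unfold labelLt
  cases ha : c a <;> cases hb : c b <;> simp_all

end Labeling

theorem List.exists_isChain_cons_of_wellFounded {α : Type*} {r : α → α → Prop}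
    (hr : WellFounded (flip r)) {P halt : α → Prop}
    (hstep : ∀ a, P a → ¬ halt a → ∃ b, r a b ∧ P b) {a : α} (ha : P a) :
    ∃ L : List α, (a :: L).IsChain r ∧ (∀ b ∈ a :: L, P b) ∧
      halt ((a :: L).getLast (List.cons_ne_nil a L)) := by
  induction a using hr.induction with
  | _ a ih =>
    by_cases hs : halt a
    · exact ⟨[], List.isChain_singleton a, by simpa using ha, hs⟩
    obtain ⟨b, hab, hb⟩ := hstep a ha hs
    obtain ⟨L, hL, hPL, hsL⟩ := ih b hab hb
    refine ⟨b :: L, List.isChain_cons_cons.2 ⟨hab, hL⟩, ?_, by rwa [List.getLast_cons_cons]⟩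
    simpa [ha] using hPL

namespace DAG

variable {G : DAG}

theorem wellFounded_transGen_swap :
    WellFounded (Relation.TransGen fun a b : G.V => ∃ e : G.E, G.src e = b ∧ G.tgt e = a) := by
  have : Std.Irrefl (Relation.TransGen fun a b : G.V => ∃ e : G.E, G.src e = b ∧ G.tgt e = a) :=
    ⟨fun v hv => G.acyclic v (Relation.transGen_swap.1 hv)⟩
  exact Finite.wellFounded_of_trans_of_irrefl _

theorem wellFounded_transGen :
    WellFounded (Relation.TransGen fun a b : G.V => ∃ e : G.E, G.src e = a ∧ G.tgt e = b) :=
  have : Std.Irrefl (Relation.TransGen fun a b : G.V => ∃ e : G.E, G.src e = a ∧ G.tgt e = b) :=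
    ⟨G.acyclic⟩
  Finite.wellFounded_of_trans_of_irrefl _

theorem wellFounded_succ : WellFounded (fun f e : G.E => G.tgt e = G.src f) :=
  Subrelation.wf (fun {f _} h => Relation.TransGen.single ⟨f, h.symm, rfl⟩)
    (InvImage.wf G.tgt wellFounded_transGen_swap)

theorem wellFounded_pred : WellFounded (fun f e : G.E => G.tgt f = G.src e) :=
  Subrelation.wf (fun {f _} h => Relation.TransGen.single ⟨f, rfl, h⟩)
    (InvImage.wf G.src wellFounded_transGen)

theorem exists_route_of_extendable (P : G.E → Prop)
    (hsucc : ∀ e, P e → ¬ G.IsSink (G.tgt e) → ∃ f, G.tgt e = G.src f ∧ P f)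
    (hpred : ∀ e, P e → ¬ G.IsSource (G.src e) → ∃ f, G.tgt f = G.src e ∧ P f)
    {e : G.E} (he : P e) : ∃ R : G.Route, e ∈ R.edges ∧ ∀ f ∈ R.edges, P f := by
  obtain ⟨L₂, hc₂, hP₂, hsink⟩ :=
    List.exists_isChain_cons_of_wellFounded wellFounded_succ (halt := fun e => G.IsSink (G.tgt e))
      hsucc he
  obtain ⟨L₁, hc₁, hP₁, hsource⟩ :=
    List.exists_isChain_cons_of_wellFounded wellFounded_pred
      (halt := fun e => G.IsSource (G.src e)) hpred he
  have hchain : (L₁.reverse ++ e :: L₂).IsChain fun a b => G.tgt a = G.src b := by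
    have h₁ := List.isChain_reverse.2 hc₁
    rw [List.reverse_cons] at h₁
    simpa using h₁.append_overlap hc₂ (List.cons_ne_nil e [])
  refine ⟨⟨L₁.reverse ++ e :: L₂, by simp, hchain, ?_, ?_⟩, by simp, ?_⟩
  · have heq : L₁.reverse ++ e :: L₂ = (e :: L₁).reverse ++ L₂ := by simp
    simpa only [heq, List.head_append_of_ne_nil (List.reverse_ne_nil_iff.2 (List.cons_ne_nil e L₁)),
      List.head_reverse] using hsource
  · rwa [List.getLast_append_of_ne_nil _ (List.cons_ne_nil e L₂)]
  · simp only [List.mem_append, List.mem_reverse]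
    rintro f (hf | hf)
    exacts [hP₁ f (List.mem_cons_of_mem e hf), hP₂ f hf]

theorem inPathLt.exists_inlt {F : G.Framing} {P Q : List G.E} (h : G.inPathLt F P Q) :
    ∃ e ∈ P, ∃ f ∈ Q, F.inlt e f := by
  obtain ⟨p, q, s, e, f, -, rfl, rfl, hef⟩ := h
  exact ⟨e, by simp, f, by simp, hef⟩

theorem outPathLt.exists_outlt {F : G.Framing} {P Q : List G.E} (h : G.outPathLt F P Q) :
    ∃ e ∈ P, ∃ f ∈ Q, F.outlt e f := by
  obtain ⟨s, p, q, e, f, -, rfl, rfl, hef⟩ := h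
  exact ⟨e, by simp, f, by simp, hef⟩

variable {c : G.E → Bool} (hin : ∀ v, G.IsInner v → Set.InjOn c (G.tgt ⁻¹' {v}))
  (hout : ∀ v, G.IsInner v → Set.InjOn c (G.src ⁻¹' {v}))

def Framing.ofLabeling : G.Framing where
  inlt := labelLt G.tgt G.IsInner c
  outlt := labelLt G.src G.IsInner c
  inlt_tgt h := h.1
  inlt_inner h := h.2.1
  inlt_irrefl := labelLt_irrefl
  inlt_trans := labelLt_trans
  inlt_total _ _ := labelLt_total hin
  outlt_src h := h.1
  outlt_inner h := h.2.1
  outlt_irrefl := labelLt_irrefl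
  outlt_trans := labelLt_trans
  outlt_total _ _ := labelLt_total hout

theorem Conflict.exists_label_ne {P Q : G.Route}
    (h : G.Conflict (Framing.ofLabeling hin hout) P Q) (k : Bool) :
    (∃ e ∈ P.edges, c e ≠ k) ∧ (∃ e ∈ Q.edges, c e ≠ k) := by
  obtain ⟨-, a, b, _, d, ea, _, hP, hQ, -, -, -, -, hlt, hgt⟩ := h
  obtain ⟨e, he, f, hf, -, -, hce, hcf⟩ := inPathLt.exists_inlt hlt
  obtain ⟨e', he', f', hf', -, -, hce', hcf'⟩ := outPathLt.exists_outlt hgt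
  rw [hP, hQ]
  cases k
  · exact ⟨⟨e, List.mem_append_left b he, by simp [hce]⟩,
      ⟨e', List.mem_append_right _ he', by simp [hce']⟩⟩
  · exact ⟨⟨f', List.mem_append_right _ hf', by simp [hcf']⟩,
      ⟨f, List.mem_append_left d hf, by simp [hcf]⟩⟩

theorem exceptional_ofLabeling_of_forall_eq {R : G.Route} {k : Bool} (hR : ∀ e ∈ R.edges, c e = k) :
    G.Exceptional (Framing.ofLabeling hin hout) R := fun _ =>
  ⟨fun h => let ⟨e, he, hne⟩ := (Conflict.exists_label_ne hin hout h k).1; hne (hR e he),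
    fun h => let ⟨e, he, hne⟩ := (Conflict.exists_label_ne hin hout h k).2; hne (hR e he)⟩

theorem Full.ncard_preimage_tgt (hfull : G.Full) {v : G.V} (hv : G.IsInner v) :
    (G.tgt ⁻¹' {v}).ncard = 2 :=
  (Nat.card_eq_fintype_card (α := {e // G.tgt e = v})).trans (hfull v hv).1

theorem Full.ncard_preimage_src (hfull : G.Full) {v : G.V} (hv : G.IsInner v) :
    (G.src ⁻¹' {v}).ncard = 2 :=
  (Nat.card_eq_fintype_card (α := {e // G.src e = v})).trans (hfull v hv).2

theorem Full.exists_labeling (hfull : G.Full) :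
    ∃ c : G.E → Bool, (∀ v, G.IsInner v → Set.InjOn c (G.tgt ⁻¹' {v})) ∧
      (∀ v, G.IsInner v → Set.InjOn c (G.src ⁻¹' {v})) :=
  exists_bool_injOn_preimage G.tgt G.src G.IsInner G.IsInner
    (fun _ hv => (hfull.ncard_preimage_tgt hv).le) (fun _ hv => (hfull.ncard_preimage_src hv).le)

theorem Full.exists_route_label_eq (hfull : G.Full)
    (hin : ∀ v, G.IsInner v → Set.InjOn c (G.tgt ⁻¹' {v}))
    (hout : ∀ v, G.IsInner v → Set.InjOn c (G.src ⁻¹' {v})) (e : G.E) :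
    ∃ R : G.Route, e ∈ R.edges ∧ ∀ f ∈ R.edges, c f = c e := by
  refine exists_route_of_extendable (c · = c e) (fun f hf hsink => ?_) (fun f hf hsource => ?_) rfl
  · have hv : G.IsInner (G.tgt f) := ⟨fun h => h f rfl, hsink⟩
    obtain ⟨f', hf', hc⟩ :=
      exists_apply_eq_of_ncard_preimage_eq_two (hfull.ncard_preimage_src hv) (hout _ hv) (c e)
    exact ⟨f', hf'.symm, hc⟩
  · have hv : G.IsInner (G.src f) := ⟨hsource, fun h => h f rfl⟩
    exact exists_apply_eq_of_ncard_preimage_eq_two (hfull.ncard_preimage_tgt hv) (hin _ hv) (c e)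

end DAG

theorem full_dag_admits_ample_framing_general (G : DAG) (hfull : G.Full) :
    ∃ F : G.Framing, G.Ample F := by
  obtain ⟨c, hin, hout⟩ := hfull.exists_labeling
  refine ⟨DAG.Framing.ofLabeling hin hout, fun e _ => ?_⟩
  obtain ⟨R, heR, hR⟩ := hfull.exists_route_label_eq hin hout e
  exact ⟨R, DAG.exceptional_ofLabeling_of_forall_eq hin hout hR, heR⟩

/-- Every full DAG (in which every edge lies on some route)
admits an ample framing. -/
theorem full_dag_admits_ample_framing (G : DAG) (hfull : G.Full)
    (hcover : ∀ e : G.E, ∃ R : G.Route, e ∈ R.edges) :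
    ∃ F : G.Framing, G.Ample F :=
  full_dag_admits_ample_framing_general G hfull
end
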